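/- Let D be a probability distribution on ℝᵈ, let w, w* be unit vectors with θ = ∠(w, w*) ∈ (0, π/4], let k ≥ 2 be an even integer, and suppose: (a) for every unit vector u, E_{x∼D}[⟨u,x⟩^k] ≤ (C₁k)^{k/2}; (b) for σ := (C₁k)^{k/(2(k+1))} · (tan θ)^{k/(k+1)}, P_{x∼D}[|⟨w,x⟩| ≤ σ] ≤ C₃σ. Then P_{x∼D}[sign(⟨w,x⟩) ≠ sign(⟨w*,x⟩)] ≤ C₃σ + (C₁k)^{k/2}(tan θ)^k / σ^k = (C₃ + 1) · (C₁k)^{k/(2(k+1))} · (tan θ)^{k/(k+1)}. -/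

import Mathlib

/-!
Write `w* = cos θ • w + sin θ • v` with `v` a unit vector orthogonal to `w`. If `x` is classified
differently by `w` and `w*`, then `cos θ · |⟨w,x⟩| ≤ sin θ · |⟨v,x⟩|`. So either `x` lies in the band
`|⟨w,x⟩| ≤ σ`, or `|⟨v,x⟩| ≥ σ / tan θ`, and Markov's inequality for the `k`-th moment in direction
`v` bounds the latter event by `(C₁k)^{k/2} tan^k θ / σ^k`. The width `σ` is chosen to balance the
two terms: `σ^{k+1} = (C₁k)^{k/2} tan^k θ`.
-/

open MeasureTheory Set Real

noncomputable def sgn (t : ℝ) : ℝ := if 0 ≤ t then 1 else -1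

open scoped RealInnerProductSpace

theorem mul_abs_le_of_sgn_ne_sgn {p q a b : ℝ} (hq : 0 ≤ q) (h : sgn a ≠ sgn (p * a + q * b)) :
    p * |a| ≤ q * |b| := by
  unfold sgn at h
  rcases le_or_gt 0 a with ha | ha
  · have hneg : p * a + q * b < 0 := by by_contra! hc; simp [ha, hc] at h
    rw [abs_of_nonneg ha]
    nlinarith [neg_abs_le b]
  · have hnonneg : 0 ≤ p * a + q * b := by by_contra! hc; simp [not_le.2 ha, not_le.2 hc] at h
    rw [abs_of_neg ha]
    nlinarith [le_abs_self b]

theorem rpow_mul_rpow_pow_succ {A T : ℝ} (hA : 0 ≤ A) (hT : 0 ≤ T) (k : ℕ) :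
    (A ^ ((k : ℝ) / (2 * (k + 1))) * T ^ ((k : ℝ) / (k + 1))) ^ (k + 1)
      = A ^ ((k : ℝ) / 2) * T ^ k := by
  have hk : (k : ℝ) + 1 ≠ 0 := by positivity
  rw [mul_pow, ← rpow_natCast (A ^ _), ← rpow_natCast (T ^ _), ← rpow_mul hA, ← rpow_mul hT,
    ← rpow_natCast T k]
  push_cast
  congr 2 <;> field_simp

theorem measureReal_abs_ge_le_integral_pow_div {α : Type*} [MeasurableSpace α] {μ : Measure α}
    [IsFiniteMeasure μ] {f : α → ℝ} {k : ℕ} (hk : Even k) (hf : Integrable (fun x ↦ f x ^ k) μ)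
    {s : ℝ} (hs : 0 < s) :
    μ.real {x | s ≤ |f x|} ≤ (∫ x, f x ^ k ∂μ) / s ^ k := by
  rw [le_div_iff₀ (by positivity), mul_comm]
  calc s ^ k * μ.real {x | s ≤ |f x|}
      ≤ s ^ k * μ.real {x | s ^ k ≤ f x ^ k} := by
        refine mul_le_mul_of_nonneg_left (measureReal_mono fun x hx ↦ ?_) (by positivity)
        simpa only [mem_ofPred_eq, hk.pow_abs] using pow_le_pow_left₀ hs.le hx k
    _ ≤ ∫ x, f x ^ k ∂μ :=
        mul_meas_ge_le_integral_of_nonneg (ae_of_all μ fun x ↦ hk.pow_nonneg _) hf _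

section InnerProductSpace

variable {E : Type*} [NormedAddCommGroup E] [InnerProductSpace ℝ E]

theorem exists_norm_eq_one_eq_cos_arccos_smul_add_sin_arccos_smul {w wstar : E}
    (hw : ‖w‖ = 1) (hwstar : ‖wstar‖ = 1) (hsin : sin (arccos ⟪w, wstar⟫) ≠ 0) :
    ∃ v : E, ‖v‖ = 1 ∧
      wstar = cos (arccos ⟪w, wstar⟫) • w + sin (arccos ⟪w, wstar⟫) • v := by
  set c := ⟪w, wstar⟫ with hc_def
  have hc : |c| ≤ 1 := by simpa [hw, hwstar] using abs_real_inner_le_norm w wstar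
  have hnorm : ‖wstar - c • w‖ = sin (arccos c) := by
    rw [sin_arccos, ← sqrt_sq (norm_nonneg _), norm_sub_sq_real, real_inner_smul_right,
      real_inner_comm, ← hc_def, norm_smul, hw, hwstar, Real.norm_eq_abs, mul_one, sq_abs]
    ring_nf
  refine ⟨(sin (arccos c))⁻¹ • (wstar - c • w), ?_, ?_⟩
  · rw [norm_smul, hnorm, norm_inv, Real.norm_eq_abs, abs_of_nonneg (sin_arccos c ▸ sqrt_nonneg _),
      inv_mul_cancel₀ hsin]
  · rw [cos_arccos (neg_le_of_abs_le hc) (le_of_abs_le hc), smul_inv_smul₀ hsin]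
    abel

variable [MeasurableSpace E] (μ : Measure E) [IsFiniteMeasure μ]

theorem measureReal_sgn_inner_ne_le {w wstar : E} (hw : ‖w‖ = 1) (hwstar : ‖wstar‖ = 1)
    (hθ : arccos ⟪w, wstar⟫ ∈ Ioo 0 (π / 2)) {k : ℕ} (hk : Even k) {M σ : ℝ} (hσ : 0 < σ)
    (hmom : ∀ u : E, ‖u‖ = 1 →
      Integrable (fun x ↦ ⟪u, x⟫ ^ k) μ ∧ ∫ x, ⟪u, x⟫ ^ k ∂μ ≤ M) :
    μ.real {x | sgn ⟪w, x⟫ ≠ sgn ⟪wstar, x⟫}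
      ≤ μ.real {x | |⟪w, x⟫| ≤ σ} + M * tan (arccos ⟪w, wstar⟫) ^ k / σ ^ k := by
  set θ := arccos ⟪w, wstar⟫
  obtain ⟨hθ0, hθ2⟩ := hθ
  have hsin : 0 < sin θ := sin_pos_of_pos_of_lt_pi hθ0 (by linarith [pi_pos])
  have hcos : 0 < cos θ := cos_pos_of_mem_Ioo ⟨by linarith [pi_pos], hθ2⟩
  have htan : 0 < tan θ := tan_pos_of_pos_of_lt_pi_div_two hθ0 hθ2
  obtain ⟨v, hv, hwstar_eq⟩ :=
    exists_norm_eq_one_eq_cos_arccos_smul_add_sin_arccos_smul hw hwstar hsin.ne'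
  obtain ⟨hint, hmomv⟩ := hmom v hv
  have htail : μ.real {x | σ / tan θ ≤ |⟪v, x⟫|} ≤ M * tan θ ^ k / σ ^ k :=
    calc μ.real {x | σ / tan θ ≤ |⟪v, x⟫|}
        ≤ (∫ x, ⟪v, x⟫ ^ k ∂μ) / (σ / tan θ) ^ k :=
          measureReal_abs_ge_le_integral_pow_div hk hint (by positivity)
      _ ≤ M / (σ / tan θ) ^ k := by gcongr
      _ = M * tan θ ^ k / σ ^ k := by rw [div_pow, div_div_eq_mul_div]
  have hsub : {x | sgn ⟪w, x⟫ ≠ sgn ⟪wstar, x⟫}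
      ⊆ {x | |⟪w, x⟫| ≤ σ} ∪ {x | σ / tan θ ≤ |⟪v, x⟫|} := by
    intro x hx
    refine or_iff_not_imp_left.2 fun hband ↦ ?_
    rw [mem_ofPred_eq, hwstar_eq, inner_add_left, real_inner_smul_left, real_inner_smul_left] at hx
    have hdis := mul_abs_le_of_sgn_ne_sgn hsin.le hx
    rw [mem_ofPred_eq, not_le] at hband
    rw [mem_ofPred_eq, tan_eq_sin_div_cos, div_div_eq_mul_div, div_le_iff₀ hsin]
    nlinarith
  calc μ.real {x | sgn ⟪w, x⟫ ≠ sgn ⟪wstar, x⟫}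
      ≤ μ.real ({x | |⟪w, x⟫| ≤ σ} ∪ {x | σ / tan θ ≤ |⟪v, x⟫|}) := measureReal_mono hsub
    _ ≤ μ.real {x | |⟪w, x⟫| ≤ σ} + μ.real {x | σ / tan θ ≤ |⟪v, x⟫|} :=
        measureReal_union_le _ _
    _ ≤ μ.real {x | |⟪w, x⟫| ≤ σ} + M * tan θ ^ k / σ ^ k := by gcongr

end InnerProductSpace

theorem disagreement_prob_bound_general {d : ℕ}
    (μ : Measure (EuclideanSpace ℝ (Fin d))) [IsProbabilityMeasure μ]
    (w wstar : EuclideanSpace ℝ (Fin d)) (hw : ‖w‖ = 1) (hwstar : ‖wstar‖ = 1)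
    (k : ℕ) (hk : Even k) (hk2 : 2 ≤ k) (C₁ C₃ : ℝ) (hC₁ : 0 < C₁)
    (hθ : Real.arccos (inner ℝ w wstar : ℝ) ∈ Ioc 0 (π / 4))
    (hmom : ∀ u : EuclideanSpace ℝ (Fin d), ‖u‖ = 1 →
      Integrable (fun x => (inner ℝ u x : ℝ) ^ k) μ ∧
      ∫ x, (inner ℝ u x : ℝ) ^ k ∂μ ≤ (C₁ * k) ^ ((k : ℝ) / 2))
    (hband : (μ {x | |(inner ℝ w x : ℝ)| ≤
        (C₁ * k) ^ ((k : ℝ) / (2 * (k + 1)))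
          * Real.tan (Real.arccos (inner ℝ w wstar : ℝ)) ^ ((k : ℝ) / (k + 1))}).toReal
      ≤ C₃ * ((C₁ * k) ^ ((k : ℝ) / (2 * (k + 1)))
          * Real.tan (Real.arccos (inner ℝ w wstar : ℝ)) ^ ((k : ℝ) / (k + 1)))) :
    (μ {x | sgn (inner ℝ w x : ℝ) ≠ sgn (inner ℝ wstar x : ℝ)}).toReal
        ≤ C₃ * ((C₁ * k) ^ ((k : ℝ) / (2 * (k + 1)))
            * Real.tan (Real.arccos (inner ℝ w wstar : ℝ)) ^ ((k : ℝ) / (k + 1)))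
          + (C₁ * k) ^ ((k : ℝ) / 2) * Real.tan (Real.arccos (inner ℝ w wstar : ℝ)) ^ k
            / ((C₁ * k) ^ ((k : ℝ) / (2 * (k + 1)))
              * Real.tan (Real.arccos (inner ℝ w wstar : ℝ)) ^ ((k : ℝ) / (k + 1))) ^ k ∧
      C₃ * ((C₁ * k) ^ ((k : ℝ) / (2 * (k + 1)))
            * Real.tan (Real.arccos (inner ℝ w wstar : ℝ)) ^ ((k : ℝ) / (k + 1)))
          + (C₁ * k) ^ ((k : ℝ) / 2) * Real.tan (Real.arccos (inner ℝ w wstar : ℝ)) ^ k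
            / ((C₁ * k) ^ ((k : ℝ) / (2 * (k + 1)))
              * Real.tan (Real.arccos (inner ℝ w wstar : ℝ)) ^ ((k : ℝ) / (k + 1))) ^ k
        = (C₃ + 1) * ((C₁ * k) ^ ((k : ℝ) / (2 * (k + 1)))
            * Real.tan (Real.arccos (inner ℝ w wstar : ℝ)) ^ ((k : ℝ) / (k + 1))) := by
  obtain ⟨hθ0, hθ4⟩ := hθ
  have hθ2 : arccos ⟪w, wstar⟫ ∈ Ioo 0 (π / 2) := ⟨hθ0, by linarith [pi_pos]⟩
  have hA : 0 < C₁ * k := mul_pos hC₁ (by exact_mod_cast (by omega : 0 < k))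
  have hT : 0 < tan (arccos ⟪w, wstar⟫) := tan_pos_of_pos_of_lt_pi_div_two hθ2.1 hθ2.2
  set σ := (C₁ * k) ^ ((k : ℝ) / (2 * (k + 1))) * tan (arccos ⟪w, wstar⟫) ^ ((k : ℝ) / (k + 1))
  have hσ : 0 < σ := by positivity
  have hbalance : (C₁ * k) ^ ((k : ℝ) / 2) * tan (arccos ⟪w, wstar⟫) ^ k / σ ^ k = σ := by
    rw [← rpow_mul_rpow_pow_succ hA.le hT.le, pow_succ, mul_div_cancel_left₀ _ (by positivity)]
  refine ⟨?_, by rw [hbalance]; ring⟩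
  calc μ.real {x | sgn ⟪w, x⟫ ≠ sgn ⟪wstar, x⟫}
      ≤ μ.real {x | |⟪w, x⟫| ≤ σ}
          + (C₁ * k) ^ ((k : ℝ) / 2) * tan (arccos ⟪w, wstar⟫) ^ k / σ ^ k :=
        measureReal_sgn_inner_ne_le μ hw hwstar hθ2 hk hσ hmom
    _ ≤ _ := add_le_add_left hband _

/-- Bounding the disagreement probability of `w` and `w*` via a band plus a Markov tail:
with `σ = (C₁k)^{k/(2(k+1))} (tan θ)^{k/(k+1)}`, the disagreement probability is at most
`C₃σ + (C₁k)^{k/2}(tan θ)^k/σ^k`, which equals `(C₃+1)(C₁k)^{k/(2(k+1))}(tan θ)^{k/(k+1)}`. -/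
theorem disagreement_prob_bound {d : ℕ}
    (μ : Measure (EuclideanSpace ℝ (Fin d))) [IsProbabilityMeasure μ]
    (w wstar : EuclideanSpace ℝ (Fin d)) (hw : ‖w‖ = 1) (hwstar : ‖wstar‖ = 1)
    (k : ℕ) (hk : Even k) (hk2 : 2 ≤ k) (C₁ C₃ : ℝ) (hC₁ : 0 < C₁) (hC₃ : 0 < C₃)
    (hθ : Real.arccos (inner ℝ w wstar : ℝ) ∈ Ioc 0 (π / 4))
    (hmom : ∀ u : EuclideanSpace ℝ (Fin d), ‖u‖ = 1 →
      Integrable (fun x => (inner ℝ u x : ℝ) ^ k) μ ∧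
      ∫ x, (inner ℝ u x : ℝ) ^ k ∂μ ≤ (C₁ * k) ^ ((k : ℝ) / 2))
    (hband : (μ {x | |(inner ℝ w x : ℝ)| ≤
        (C₁ * k) ^ ((k : ℝ) / (2 * (k + 1)))
          * Real.tan (Real.arccos (inner ℝ w wstar : ℝ)) ^ ((k : ℝ) / (k + 1))}).toReal
      ≤ C₃ * ((C₁ * k) ^ ((k : ℝ) / (2 * (k + 1)))
          * Real.tan (Real.arccos (inner ℝ w wstar : ℝ)) ^ ((k : ℝ) / (k + 1)))) :
    (μ {x | sgn (inner ℝ w x : ℝ) ≠ sgn (inner ℝ wstar x : ℝ)}).toReal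
        ≤ C₃ * ((C₁ * k) ^ ((k : ℝ) / (2 * (k + 1)))
            * Real.tan (Real.arccos (inner ℝ w wstar : ℝ)) ^ ((k : ℝ) / (k + 1)))
          + (C₁ * k) ^ ((k : ℝ) / 2) * Real.tan (Real.arccos (inner ℝ w wstar : ℝ)) ^ k
            / ((C₁ * k) ^ ((k : ℝ) / (2 * (k + 1)))
              * Real.tan (Real.arccos (inner ℝ w wstar : ℝ)) ^ ((k : ℝ) / (k + 1))) ^ k ∧
      C₃ * ((C₁ * k) ^ ((k : ℝ) / (2 * (k + 1)))
            * Real.tan (Real.arccos (inner ℝ w wstar : ℝ)) ^ ((k : ℝ) / (k + 1)))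
          + (C₁ * k) ^ ((k : ℝ) / 2) * Real.tan (Real.arccos (inner ℝ w wstar : ℝ)) ^ k
            / ((C₁ * k) ^ ((k : ℝ) / (2 * (k + 1)))
              * Real.tan (Real.arccos (inner ℝ w wstar : ℝ)) ^ ((k : ℝ) / (k + 1))) ^ k
        = (C₃ + 1) * ((C₁ * k) ^ ((k : ℝ) / (2 * (k + 1)))
            * Real.tan (Real.arccos (inner ℝ w wstar : ℝ)) ^ ((k : ℝ) / (k + 1))) :=
  disagreement_prob_bound_general μ w wstar hw hwstar k hk hk2 C₁ C₃ hC₁ hθ hmom hband
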